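/- arXiv:2311.13030 — 2 statements merged into one kernel-verified Lean document; each statement's English description precedes it below -/
import Mathlib

section
/- Define θ̃(z,a) = θ(z−a)/θ(−a) and, for parameters p, q, x, the 2×2 matrix M with entries A = θ̃(t, −p+x+q), B = −θ̃(t, p+x+q), C = θ̃(t, −p+x−q), D = −θ̃(t, p+x−q), viewed as functions of t. Then the determinant AD − BC, as a function of t, equals L(p,q,x)·θ(t)·θ(t−2x), where L(p,q,x) = −θ(2p)θ(2q) / (θ(p−x−q)θ(q−x−p)θ(p+q+x)θ(p+q−x)). -/
open Complex

/-- Membership in the lattice `Λ = ℤ + ℤτ`. -/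
def InLattice (τ z : ℂ) : Prop := ∃ m n : ℤ, z = (m : ℂ) + (n : ℂ) * τ

/-!
The determinant is an instance of Weierstrass's three-term identity
`P_u(s) P_w(v) - P_v(s) P_w(u) + P_v(u) P_w(s) = 0` for `P_a(z) = θ(z + a) θ(z - a)`,
taken at `s = t - x`, `u = p - q`, `v = p + q`, `w = x`.
As functions of `s`, all `P_a` pick up the same factors under `s ↦ s + 1` and `s ↦ s + τ`.
For generic `w` the left side vanishes at the zeros `±w + Λ` of `P_w`, which are simple, so its
quotient by `P_w` is a doubly periodic entire function, constant by Liouville's theorem, and zero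
since the left side vanishes at `s = u`. Continuity in `w` removes the genericity assumption.
-/

open Function Topology

namespace InLattice

variable {τ z₁ z₂ : ℂ}

theorem sub (h₁ : InLattice τ z₁) (h₂ : InLattice τ z₂) : InLattice τ (z₁ - z₂) := by
  obtain ⟨m₁, n₁, rfl⟩ := h₁
  obtain ⟨m₂, n₂, rfl⟩ := h₂
  exact ⟨m₁ - m₂, n₁ - n₂, by push_cast; ring⟩

theorem periodic {β : Type*} {f : ℂ → β} (h : InLattice τ z₁) (h₁ : Periodic f 1)
    (hτ : Periodic f τ) : Periodic f z₁ := by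
  obtain ⟨m, n, rfl⟩ := h
  simpa using (h₁.int_mul m).add_period (hτ.int_mul n)

theorem countable_setOf (τ : ℂ) : {z | InLattice τ z}.Countable :=
  (Set.countable_range fun mn : ℤ × ℤ => (mn.1 : ℂ) + mn.2 * τ).mono
    fun _ ⟨m, n, hz⟩ => Set.mem_range.mpr ⟨(m, n), hz.symm⟩

theorem exists_sub_mem_parallelogram (hτ : τ.im ≠ 0) (s : ℂ) :
    ∃ a ∈ Set.Icc (0 : ℝ) 1, ∃ b ∈ Set.Icc (0 : ℝ) 1, InLattice τ (s - (a + b * τ)) := by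
  set b : ℝ := s.im / τ.im
  set a : ℝ := s.re - b * τ.re
  have hs : s = a + b * τ := by
    apply Complex.ext <;> simp [a, b, hτ]
  refine ⟨Int.fract a, ⟨Int.fract_nonneg a, (Int.fract_lt_one a).le⟩,
    Int.fract b, ⟨Int.fract_nonneg b, (Int.fract_lt_one b).le⟩, ⌊a⌋, ⌊b⌋, ?_⟩
  rw [hs, Int.fract, Int.fract]
  push_cast
  ring

end InLattice

theorem Function.Periodic.eq_zero_iff_of_mul {f e : ℂ → ℂ} {c : ℂ} (he : ∀ s, e s ≠ 0)
    (hf : ∀ s, f (s + c) = e s * f s) : Periodic (fun s => f s = 0) c := fun s => by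
  simp [hf, he s]

theorem Differentiable.apply_eq_apply_of_periodic {E : Type*} [NormedAddCommGroup E]
    [NormedSpace ℂ E] {f : ℂ → E} {τ : ℂ} (hτ : τ.im ≠ 0) (hf : Differentiable ℂ f)
    (h₁ : Periodic f 1) (h₂ : Periodic f τ) (z w : ℂ) : f z = f w := by
  set K : Set ℂ := (fun ab : ℝ × ℝ => (ab.1 : ℂ) + ab.2 * τ) '' Set.Icc 0 1 ×ˢ Set.Icc 0 1
  have hK : IsCompact K := (isCompact_Icc.prod isCompact_Icc).image (by fun_prop)
  have hrange : Set.range f ⊆ f '' K := by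
    rintro _ ⟨s, rfl⟩
    obtain ⟨a, ha, b, hb, hlat⟩ := InLattice.exists_sub_mem_parallelogram hτ s
    refine ⟨a + b * τ, ⟨(a, b), ⟨ha, hb⟩, rfl⟩, ?_⟩
    simpa using (hlat.periodic h₁ h₂ (a + b * τ)).symm
  exact hf.apply_eq_apply_of_bounded ((hK.image hf.continuous).isBounded.subset hrange) z w

/-- `G / D`, completed by l'Hôpital's rule at the zeros of `D`. -/
noncomputable def removableDiv (G D : ℂ → ℂ) (s : ℂ) : ℂ :=
  if D s = 0 then deriv G s / deriv D s else G s / D s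

section RemovableDiv

variable {G D : ℂ → ℂ}

theorem differentiable_removableDiv (hG : Differentiable ℂ G) (hD : Differentiable ℂ D)
    (hzero : ∀ s, D s = 0 → G s = 0) (hsimple : ∀ s, D s = 0 → deriv D s ≠ 0) :
    Differentiable ℂ (removableDiv G D) := by
  intro s₀
  by_cases h0 : D s₀ = 0
  · have hdslope : ∀ {f : ℂ → ℂ}, Differentiable ℂ f → Differentiable ℂ (dslope f s₀) :=
      fun hf => differentiableOn_univ.mp
        ((Complex.differentiableOn_dslope Filter.univ_mem).mpr hf.differentiableOn)
    have hne : ∀ᶠ z in 𝓝 s₀, dslope D s₀ z ≠ 0 :=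
      (hdslope hD).continuous.continuousAt.eventually_ne (by rw [dslope_same]; exact hsimple s₀ h0)
    -- near a simple zero `s₀` of `D`, both `G` and `D` are divisible by `z - s₀`
    have key : removableDiv G D =ᶠ[𝓝 s₀] fun z => dslope G s₀ z / dslope D s₀ z := by
      filter_upwards [hne] with z hz
      rcases eq_or_ne z s₀ with rfl | hzs
      · simp [removableDiv, h0, dslope_same]
      · have hfac : ∀ f : ℂ → ℂ, f s₀ = 0 → f z = (z - s₀) * dslope f s₀ z := fun f hf => by
          rw [← smul_eq_mul, sub_smul_dslope, hf, sub_zero]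
        have hDz : D z ≠ 0 := by rw [hfac D h0]; exact mul_ne_zero (sub_ne_zero.mpr hzs) hz
        rw [removableDiv, if_neg hDz, hfac D h0, hfac G (hzero s₀ h0),
          mul_div_mul_left _ _ (sub_ne_zero.mpr hzs)]
    exact key.differentiableAt_iff.mpr
      (((hdslope hG) s₀).div ((hdslope hD) s₀) (by rw [dslope_same]; exact hsimple s₀ h0))
  · have key : removableDiv G D =ᶠ[𝓝 s₀] fun z => G z / D z := by
      filter_upwards [hD.continuous.continuousAt.eventually_ne h0] with z hz
      simp [removableDiv, hz]
    exact key.differentiableAt_iff.mpr ((hG s₀).div (hD s₀) h0)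

theorem deriv_add_eq_mul_of_eq_zero {f e : ℂ → ℂ} {c s : ℂ} (hf : Differentiable ℂ f)
    (he : Differentiable ℂ e) (hfc : ∀ s, f (s + c) = e s * f s) (hs : f s = 0) :
    deriv f (s + c) = e s * deriv f s := by
  rw [← deriv_comp_add_const, funext hfc, deriv_fun_mul (he s) (hf s), hs, mul_zero, zero_add]

theorem periodic_removableDiv {e : ℂ → ℂ} {c : ℂ} (hG : Differentiable ℂ G)
    (hD : Differentiable ℂ D) (he : Differentiable ℂ e) (he0 : ∀ s, e s ≠ 0)
    (hGc : ∀ s, G (s + c) = e s * G s) (hDc : ∀ s, D (s + c) = e s * D s)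
    (hzero : ∀ s, D s = 0 → G s = 0) : Periodic (removableDiv G D) c := by
  intro s
  by_cases h0 : D s = 0
  · have h0' : D (s + c) = 0 := by rw [hDc, h0, mul_zero]
    rw [removableDiv, removableDiv, if_pos h0, if_pos h0',
      deriv_add_eq_mul_of_eq_zero hG he hGc (hzero s h0), deriv_add_eq_mul_of_eq_zero hD he hDc h0,
      mul_div_mul_left _ _ (he0 s)]
  · have h0' : D (s + c) ≠ 0 := by rw [hDc]; exact mul_ne_zero (he0 s) h0
    rw [removableDiv, removableDiv, if_neg h0, if_neg h0', hGc, hDc, mul_div_mul_left _ _ (he0 s)]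

end RemovableDiv

theorem exists_eq_const_mul_of_quasiPeriodic {τ : ℂ} (hτ : τ.im ≠ 0) {G D e₁ e₂ : ℂ → ℂ}
    (hG : Differentiable ℂ G) (hD : Differentiable ℂ D)
    (he₁ : Differentiable ℂ e₁) (he₂ : Differentiable ℂ e₂)
    (he₁0 : ∀ s, e₁ s ≠ 0) (he₂0 : ∀ s, e₂ s ≠ 0)
    (hG₁ : ∀ s, G (s + 1) = e₁ s * G s) (hD₁ : ∀ s, D (s + 1) = e₁ s * D s)
    (hG₂ : ∀ s, G (s + τ) = e₂ s * G s) (hD₂ : ∀ s, D (s + τ) = e₂ s * D s)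
    (hzero : ∀ s, D s = 0 → G s = 0) (hsimple : ∀ s, D s = 0 → deriv D s ≠ 0) :
    ∃ κ, ∀ s, G s = κ * D s := by
  have hconst := (differentiable_removableDiv hG hD hzero hsimple).apply_eq_apply_of_periodic hτ
    (periodic_removableDiv hG hD he₁ he₁0 hG₁ hD₁ hzero)
    (periodic_removableDiv hG hD he₂ he₂0 hG₂ hD₂ hzero)
  refine ⟨removableDiv G D 0, fun s => ?_⟩
  by_cases h0 : D s = 0
  · rw [hzero s h0, h0, mul_zero]
  · rw [← hconst s, removableDiv, if_neg h0, div_mul_cancel₀ _ h0]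

noncomputable def thetaProd (θ : ℂ → ℂ) (a z : ℂ) : ℂ := θ (z + a) * θ (z - a)

section Theta

variable {τ : ℂ} {θ : ℂ → ℂ}

@[fun_prop]
theorem differentiable_thetaProd (hθ : Differentiable ℂ θ) (a : ℂ) :
    Differentiable ℂ (thetaProd θ a) := by
  unfold thetaProd; fun_prop

theorem thetaProd_add_one (hθ1 : ∀ z, θ (z + 1) = -θ z) (a z : ℂ) :
    thetaProd θ a (z + 1) = thetaProd θ a z := by
  rw [thetaProd, add_right_comm, add_sub_right_comm, hθ1, hθ1, neg_mul_neg, thetaProd]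

theorem thetaProd_add_tau
    (hθτ : ∀ z, θ (z + τ) = -cexp (-(Real.pi : ℂ) * I * (τ + 2 * z)) * θ z) (a z : ℂ) :
    thetaProd θ a (z + τ) = cexp (-(Real.pi : ℂ) * I * (2 * τ + 4 * z)) * thetaProd θ a z := by
  have hexp : cexp (-(Real.pi : ℂ) * I * (2 * τ + 4 * z)) =
      cexp (-(Real.pi : ℂ) * I * (τ + 2 * (z + a))) *
        cexp (-(Real.pi : ℂ) * I * (τ + 2 * (z - a))) := by
    rw [← Complex.exp_add]; ring_nf
  rw [thetaProd, add_right_comm, add_sub_right_comm, hθτ, hθτ, thetaProd, hexp]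
  ring

theorem thetaProd_neg (hθodd : ∀ z, θ (-z) = -θ z) (a z : ℂ) :
    thetaProd θ a (-z) = thetaProd θ a z := by
  rw [thetaProd, thetaProd, show -z + a = -(z - a) by ring, show -z - a = -(z + a) by ring,
    hθodd, hθodd, neg_mul_neg, mul_comm]

theorem thetaProd_comm (hθodd : ∀ z, θ (-z) = -θ z) (a z : ℂ) :
    thetaProd θ a z = -thetaProd θ z a := by
  rw [thetaProd, thetaProd, show z - a = -(a - z) by ring, hθodd, add_comm]
  ring

theorem thetaProd_self (hθodd : ∀ z, θ (-z) = -θ z) (z : ℂ) : thetaProd θ z z = 0 := by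
  have := thetaProd_comm hθodd z z
  linear_combination this / 2

theorem thetaProd_eq_zero_iff (hθzero : ∀ z, θ z = 0 ↔ InLattice τ z) (a z : ℂ) :
    thetaProd θ a z = 0 ↔ InLattice τ (z + a) ∨ InLattice τ (z - a) := by
  rw [thetaProd, mul_eq_zero, hθzero, hθzero]

theorem deriv_thetaProd_ne_zero (hθ : Differentiable ℂ θ)
    (hθzero : ∀ z, θ z = 0 ↔ InLattice τ z) (hθsimple : ∀ z, InLattice τ z → deriv θ z ≠ 0)
    {a z : ℂ} (ha : ¬InLattice τ (2 * a)) (hz : thetaProd θ a z = 0) :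
    deriv (thetaProd θ a) z ≠ 0 := by
  have hderiv : deriv (thetaProd θ a) z =
      deriv θ (z + a) * θ (z - a) + θ (z + a) * deriv θ (z - a) := by
    change deriv (fun s => θ (s + a) * θ (s - a)) z = _
    rw [deriv_fun_mul (by fun_prop) (by fun_prop), deriv_comp_add_const, deriv_comp_sub_const]
  have hdiff : InLattice τ (z + a) → InLattice τ (z - a) → False := fun h₁ h₂ =>
    ha (by simpa [two_mul, add_sub_sub_cancel] using h₁.sub h₂)
  rw [hderiv]
  rcases (thetaProd_eq_zero_iff hθzero a z).mp hz with h | h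
  · rw [(hθzero _).mpr h, zero_mul, add_zero]
    exact mul_ne_zero (hθsimple _ h) fun h' => hdiff h ((hθzero _).mp h')
  · rw [(hθzero _).mpr h, mul_zero, zero_add]
    exact mul_ne_zero (fun h' => hdiff ((hθzero _).mp h') h) (hθsimple _ h)

theorem thetaProd_three_term_of_not_inLattice (hτ : τ.im ≠ 0) (hθ : Differentiable ℂ θ)
    (hθodd : ∀ z, θ (-z) = -θ z) (hθ1 : ∀ z, θ (z + 1) = -θ z)
    (hθτ : ∀ z, θ (z + τ) = -cexp (-(Real.pi : ℂ) * I * (τ + 2 * z)) * θ z)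
    (hθzero : ∀ z, θ z = 0 ↔ InLattice τ z) (hθsimple : ∀ z, InLattice τ z → deriv θ z ≠ 0)
    {u w : ℂ} (hw : ¬InLattice τ (2 * w)) (huw : ¬InLattice τ (u + w))
    (huw' : ¬InLattice τ (u - w)) (v s : ℂ) :
    thetaProd θ u s * thetaProd θ w v - thetaProd θ v s * thetaProd θ w u +
      thetaProd θ v u * thetaProd θ w s = 0 := by
  set G : ℂ → ℂ := fun s => thetaProd θ u s * thetaProd θ w v -
    thetaProd θ v s * thetaProd θ w u + thetaProd θ v u * thetaProd θ w s with hG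
  set e : ℂ → ℂ := fun z => cexp (-(Real.pi : ℂ) * I * (2 * τ + 4 * z))
  have hG₁ : ∀ s, G (s + 1) = 1 * G s := fun s => by
    simp only [hG, thetaProd_add_one hθ1, one_mul]
  have hG₂ : ∀ s, G (s + τ) = e s * G s := fun s => by
    simp only [hG, thetaProd_add_tau hθτ]; ring
  have hGw : G w = 0 := by
    simp only [hG, thetaProd_comm hθodd u w, thetaProd_comm hθodd v w, thetaProd_self hθodd]
    ring
  have hG_even : ∀ s, G (-s) = G s := fun s => by simp only [hG, thetaProd_neg hθodd]
  have hGzero : ∀ b z, InLattice τ z → (G (b + z) = 0 ↔ G b = 0) := fun b z hz =>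
    Eq.to_iff (hz.periodic (Function.Periodic.eq_zero_iff_of_mul (fun _ => one_ne_zero) hG₁)
      (Function.Periodic.eq_zero_iff_of_mul (fun _ => Complex.exp_ne_zero _) hG₂) b)
  have hzero : ∀ s, thetaProd θ w s = 0 → G s = 0 := fun s hs => by
    rcases (thetaProd_eq_zero_iff hθzero w s).mp hs with h | h
    · rw [show s = -w + (s + w) by ring, hGzero _ _ h, hG_even, hGw]
    · rw [show s = w + (s - w) by ring, hGzero _ _ h, hGw]
  obtain ⟨κ, hκ⟩ := exists_eq_const_mul_of_quasiPeriodic hτ (e₁ := fun _ => 1) (e₂ := e)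
    (by simp only [hG]; fun_prop) (differentiable_thetaProd hθ w) (by fun_prop) (by fun_prop)
    (fun _ => one_ne_zero) (fun _ => Complex.exp_ne_zero _) hG₁
    (fun s => by rw [thetaProd_add_one hθ1, one_mul]) hG₂ (thetaProd_add_tau hθτ w) hzero
    (fun _ => deriv_thetaProd_ne_zero hθ hθzero hθsimple hw)
  have hκ0 : κ = 0 := by
    have hGu : G u = 0 := by simp only [hG, thetaProd_self hθodd]; ring
    have hDu : thetaProd θ w u ≠ 0 := by
      rw [Ne, thetaProd_eq_zero_iff hθzero]; tauto
    simpa [hDu, hGu] using (hκ u).symm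
  simpa [hκ0] using hκ s

theorem thetaProd_three_term (hτ : τ.im ≠ 0) (hθ : Differentiable ℂ θ)
    (hθodd : ∀ z, θ (-z) = -θ z) (hθ1 : ∀ z, θ (z + 1) = -θ z)
    (hθτ : ∀ z, θ (z + τ) = -cexp (-(Real.pi : ℂ) * I * (τ + 2 * z)) * θ z)
    (hθzero : ∀ z, θ z = 0 ↔ InLattice τ z) (hθsimple : ∀ z, InLattice τ z → deriv θ z ≠ 0)
    (s u v w : ℂ) :
    thetaProd θ u s * thetaProd θ w v - thetaProd θ v s * thetaProd θ w u +
      thetaProd θ v u * thetaProd θ w s = 0 := by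
  have hΛ := InLattice.countable_setOf τ
  have hbad : {w | InLattice τ (2 * w) ∨ InLattice τ (u + w) ∨ InLattice τ (u - w)}.Countable :=
    (hΛ.preimage (mul_right_injective₀ two_ne_zero)).union
      ((hΛ.preimage (add_right_injective u)).union (hΛ.preimage (sub_right_injective (b := u))))
  have hcont : Continuous fun w => thetaProd θ u s * thetaProd θ w v -
      thetaProd θ v s * thetaProd θ w u + thetaProd θ v u * thetaProd θ w s := by
    have := hθ.continuous
    unfold thetaProd; fun_prop
  refine congrFun (hcont.ext_on (hbad.dense_compl ℂ) continuous_const fun w hw => ?_) w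
  simp only [Set.mem_compl_iff, Set.mem_ofPred_eq, not_or] at hw
  exact thetaProd_three_term_of_not_inLattice hτ hθ hθodd hθ1 hθτ hθzero hθsimple
    hw.1 hw.2.1 hw.2.2 v s

end Theta

theorem determinant_theta_identity_general
    (τ : ℂ) (hτ : 0 < τ.im) (θ : ℂ → ℂ)
    (hθdiff : Differentiable ℂ θ)
    (hθodd : ∀ z, θ (-z) = -θ z)
    (hθ1 : ∀ z, θ (z + 1) = -θ z)
    (hθτ : ∀ z, θ (z + τ) = -Complex.exp (-(Real.pi : ℂ) * Complex.I * (τ + 2 * z)) * θ z)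
    (hθzero : ∀ z, θ z = 0 ↔ InLattice τ z)
    (hθsimple : ∀ z, InLattice τ z → deriv θ z ≠ 0)
    (p q x : ℂ)
    (h1 : ¬ InLattice τ (p + x + q)) (h2 : ¬ InLattice τ (p + x - q))
    (h3 : ¬ InLattice τ (p - x + q)) (h4 : ¬ InLattice τ (p - x - q))
    (tθ : ℂ → ℂ → ℂ) (htθ : ∀ z a, tθ z a = θ (z - a) / θ (-a)) :
    ∀ t : ℂ,
      tθ t (-p + x + q) * (-tθ t (p + x - q)) - (-tθ t (p + x + q)) * tθ t (-p + x - q) =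
      (-θ (2 * p) * θ (2 * q) /
          (θ (p - x - q) * θ (q - x - p) * θ (p + q + x) * θ (p + q - x))) *
        θ t * θ (t - 2 * x) := by
  intro t
  have W := thetaProd_three_term hτ.ne' hθdiff hθodd hθ1 hθτ hθzero hθsimple
    (t - x) (p - q) (p + q) x
  have hne : ∀ z, ¬InLattice τ z → θ z ≠ 0 := fun z hz h => hz ((hθzero z).mp h)
  have n1 := hne _ h1
  have n2 := hne _ h2
  have n3 := hne _ h3
  have n4 := hne _ h4
  -- after normalising the arguments of `θ`, `W` and the goal differ only by these signs
  have o1 : θ (-x - p + q) = -θ (x + p - q) := by rw [← hθodd]; ring_nf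
  have o2 : θ (-x - p - q) = -θ (x + p + q) := by rw [← hθodd]; ring_nf
  have o3 : θ (-(q * 2)) = -θ (q * 2) := hθodd _
  simp only [thetaProd, htθ] at W ⊢
  ring_nf at W n1 n2 n3 n4 ⊢
  rw [o1, o2]
  rw [o3] at W
  field_simp
  linear_combination W

/-- with `θ̃(z,a) = θ(z-a)/θ(-a)` and
`A = θ̃(t,-p+x+q)`, `B = -θ̃(t,p+x+q)`, `C = θ̃(t,-p+x-q)`, `D = -θ̃(t,p+x-q)`,
the determinant `AD - BC` equals `L(p,q,x)·θ(t)·θ(t-2x)` as a function of `t`, where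
`L(p,q,x) = -θ(2p)θ(2q)/(θ(p-x-q)θ(q-x-p)θ(p+q+x)θ(p+q-x))`. -/
theorem determinant_theta_identity
    (τ : ℂ) (hτ : 0 < τ.im) (θ : ℂ → ℂ)
    (hθdiff : Differentiable ℂ θ)
    (hθodd : ∀ z, θ (-z) = -θ z)
    (hθ1 : ∀ z, θ (z + 1) = -θ z)
    (hθτ : ∀ z, θ (z + τ) = -Complex.exp (-(Real.pi : ℂ) * Complex.I * (τ + 2 * z)) * θ z)
    (hθzero : ∀ z, θ z = 0 ↔ InLattice τ z)
    (hθsimple : ∀ z, InLattice τ z → deriv θ z ≠ 0)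
    (p q x : ℂ)
    (h1 : ¬ InLattice τ (p + x + q)) (h2 : ¬ InLattice τ (p + x - q))
    (h3 : ¬ InLattice τ (p - x + q)) (h4 : ¬ InLattice τ (p - x - q))
    (h2p : ¬ InLattice τ (2 * p)) (h2q : ¬ InLattice τ (2 * q))
    (tθ : ℂ → ℂ → ℂ) (htθ : ∀ z a, tθ z a = θ (z - a) / θ (-a)) :
    ∀ t : ℂ,
      tθ t (-p + x + q) * (-tθ t (p + x - q)) - (-tθ t (p + x + q)) * tθ t (-p + x - q) =
      (-θ (2 * p) * θ (2 * q) /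
          (θ (p - x - q) * θ (q - x - p) * θ (p + q + x) * θ (p + q - x))) *
        θ t * θ (t - 2 * x) :=
  determinant_theta_identity_general τ hτ θ hθdiff hθodd hθ1 hθτ hθzero hθsimple p q x h1 h2 h3 h4
    tθ htθ
end

section
/- Let H be a Hilbert space of the form L²(X, L²(Y)) and let H₀ be a bounded operator on L²(X) with nonnegative integral kernel K(p,q) ≥ 0. Suppose (U_{p,q}) is a measurable family of unitary operators on L²(Y), and define H₁ on L²(X × Y) by (H₁f)(p) = ∫_X U_{p,q} f(q) K(p,q) dq. Then H₁ is a bounded operator with ‖H₁‖ ≤ ‖H₀‖. -/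
/-!
Since each `U p q` is an isometry and `K ≥ 0`, the triangle inequality for the Bochner integral
gives the pointwise domination `‖(H₁ f) p‖ ≤ ∫ K(p,q) ‖f(q)‖ dq = (H₀ |f|)(p)`, where
`|f| = (q ↦ ‖f(q)‖) ∈ L²(X)` has the same `L²` norm as `f`. Taking `L²` norms,
`‖H₁ f‖ ≤ ‖H₀ |f|‖ ≤ ‖H₀‖ ‖f‖`.
-/

open MeasureTheory

namespace MeasureTheory.Lp

variable {α E : Type*} [MeasurableSpace α] {μ : Measure α} {p : ENNReal}
  [NormedAddCommGroup E] (𝕜 : Type*) [RCLike 𝕜]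

theorem memLp_ofReal_norm (f : Lp E p μ) : MemLp (fun x => ((‖f x‖ : ℝ) : 𝕜)) p μ :=
  (Lp.memLp f).norm.ofReal

noncomputable def normLp (f : Lp E p μ) : Lp 𝕜 p μ :=
  (memLp_ofReal_norm 𝕜 f).toLp _

variable {𝕜}

theorem coeFn_normLp (f : Lp E p μ) :
    normLp 𝕜 f =ᵐ[μ] fun x => ((‖f x‖ : ℝ) : 𝕜) :=
  (memLp_ofReal_norm 𝕜 f).coeFn_toLp

@[simp]
theorem norm_normLp (f : Lp E p μ) : ‖normLp 𝕜 f‖ = ‖f‖ := by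
  rw [normLp, Lp.norm_toLp, Lp.norm_def]
  congr 1
  exact eLpNorm_congr_norm_ae (.of_forall fun x => by simp)

end MeasureTheory.Lp

theorem norm_integral_smul_le_norm_integral_ofReal_mul_norm {α 𝕜 F : Type*} [MeasurableSpace α]
    {μ : Measure α} [RCLike 𝕜] [NormedAddCommGroup F] [NormedSpace 𝕜 F] [NormedSpace ℝ F]
    {c : α → ℝ} (hc : ∀ x, 0 ≤ c x) (g : α → F) :
    ‖∫ x, (c x : 𝕜) • g x ∂μ‖ ≤ ‖∫ x, ((c x * ‖g x‖ : ℝ) : 𝕜) ∂μ‖ :=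
  calc ‖∫ x, (c x : 𝕜) • g x ∂μ‖ ≤ ∫ x, ‖(c x : 𝕜) • g x‖ ∂μ := norm_integral_le_integral_norm _
    _ = ∫ x, c x * ‖g x‖ ∂μ := by simp only [norm_smul, RCLike.norm_ofReal, abs_of_nonneg (hc _)]
    _ ≤ ‖∫ x, ((c x * ‖g x‖ : ℝ) : 𝕜) ∂μ‖ := by
      rw [integral_ofReal, RCLike.norm_ofReal]
      exact le_abs_self _

theorem hecke_operator_bounded_general
    {X Y : Type*} [MeasurableSpace X] [MeasurableSpace Y]
    (μ : Measure X) (ν : Measure Y)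
    (K : X → X → ℝ) (hK : ∀ p q, 0 ≤ K p q)
    (H₀ : Lp ℂ 2 μ →L[ℂ] Lp ℂ 2 μ)
    (hH₀ : ∀ F : Lp ℂ 2 μ, ∀ᵐ p ∂μ,
      (H₀ F : X → ℂ) p = ∫ q, (K p q : ℂ) * (F : X → ℂ) q ∂μ)
    (U : X → X → (Lp ℂ 2 ν →L[ℂ] Lp ℂ 2 ν))
    (hUiso : ∀ p q v, ‖U p q v‖ = ‖v‖)
    (H₁ : Lp (Lp ℂ 2 ν) 2 μ →ₗ[ℂ] Lp (Lp ℂ 2 ν) 2 μ)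
    (hH₁ : ∀ f : Lp (Lp ℂ 2 ν) 2 μ, ∀ᵐ p ∂μ,
      (H₁ f : X → Lp ℂ 2 ν) p = ∫ q, (K p q : ℂ) • (U p q) ((f : X → Lp ℂ 2 ν) q) ∂μ) :
    ∀ f, ‖H₁ f‖ ≤ ‖H₀‖ * ‖f‖ := by
  intro f
  have hdom : ∀ᵐ p ∂μ, ‖(H₁ f : X → Lp ℂ 2 ν) p‖ ≤ ‖(H₀ (Lp.normLp ℂ f) : X → ℂ) p‖ := by
    filter_upwards [hH₁ f, hH₀ (Lp.normLp ℂ f)] with p h₁ h₀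
    rw [h₁, h₀]
    refine (norm_integral_smul_le_norm_integral_ofReal_mul_norm (hK p) _).trans_eq ?_
    congr 1
    refine integral_congr_ae ?_
    filter_upwards [Lp.coeFn_normLp (𝕜 := ℂ) f] with q hq
    simp [hq, hUiso]
  calc ‖H₁ f‖ ≤ ‖H₀ (Lp.normLp ℂ f)‖ := Lp.norm_le_norm_of_ae_le hdom
    _ ≤ ‖H₀‖ * ‖Lp.normLp ℂ f‖ := H₀.le_opNorm _
    _ = ‖H₀‖ * ‖f‖ := by rw [Lp.norm_normLp]

/-- if `H₀` is a bounded operator on `L²(X)` with nonnegative kernel `K`,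
`(U_{p,q})` a measurable family of unitaries on `L²(Y)`, and `H₁` acts on
`L²(X; L²(Y)) ≅ L²(X×Y)` by `(H₁f)(p) = ∫ U_{p,q} f(q) K(p,q) dq`, then
`H₁` is bounded with `‖H₁‖ ≤ ‖H₀‖`. -/
theorem hecke_operator_bounded
    {X Y : Type*} [MeasurableSpace X] [MeasurableSpace Y]
    (μ : Measure X) (ν : Measure Y) [SigmaFinite μ] [SigmaFinite ν]
    (K : X → X → ℝ) (hK : ∀ p q, 0 ≤ K p q)
    (H₀ : Lp ℂ 2 μ →L[ℂ] Lp ℂ 2 μ)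
    (hH₀ : ∀ F : Lp ℂ 2 μ, ∀ᵐ p ∂μ,
      (H₀ F : X → ℂ) p = ∫ q, (K p q : ℂ) * (F : X → ℂ) q ∂μ)
    (U : X → X → (Lp ℂ 2 ν →L[ℂ] Lp ℂ 2 ν))
    (hUiso : ∀ p q v, ‖U p q v‖ = ‖v‖)
    (hUsurj : ∀ p q, Function.Surjective (U p q))
    (hUmeas : ∀ p, AEStronglyMeasurable (fun q => U p q) μ)
    (H₁ : Lp (Lp ℂ 2 ν) 2 μ →ₗ[ℂ] Lp (Lp ℂ 2 ν) 2 μ)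
    (hH₁ : ∀ f : Lp (Lp ℂ 2 ν) 2 μ, ∀ᵐ p ∂μ,
      (H₁ f : X → Lp ℂ 2 ν) p = ∫ q, (K p q : ℂ) • (U p q) ((f : X → Lp ℂ 2 ν) q) ∂μ) :
    ∀ f, ‖H₁ f‖ ≤ ‖H₀‖ * ‖f‖ :=
  hecke_operator_bounded_general μ ν K hK H₀ hH₀ U hUiso H₁ hH₁
end
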